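/- Let S be a finite right loop with a two-element invariant sub right loop T = {1, t} such that S/T is a group. Then the group torsion G_S = ⟨ f(y,z) | y, z ∈ S ⟩ ≤ Sym(S) is an elementary abelian 2-group. -/

import Mathlib

/-!
Left multiplication by `t` is a fixed-point-free involution `σ` whose orbits are the `T`-classes.
Since `S/T` is a group, `f(y,z) x` lies in the class of `x`, so every generator, and hence every
element of `G_S`, maps each `x` to `x` or `σ x`. Such permutations commute with `σ`, so on each
class they act as the identity or as `σ`; thus they square to `1` and commute with each other.
-/

namespace Equiv.Perm

variable {α : Type*} (σ : α → α) (hσ : Function.Involutive σ)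

def orbitPreserving : Subgroup (Perm α) where
  carrier := {p | ∀ x, p x = x ∨ p x = σ x}
  one_mem' _ := Or.inl rfl
  mul_mem' {p q} hp hq x := by
    rcases hq x with hqx | hqx <;> rw [Perm.mul_apply, hqx]
    · exact hp x
    · rcases hp (σ x) with h | h
      · exact Or.inr h
      · exact Or.inl (h.trans (hσ x))
  inv_mem' {p} hp x := by
    have hx : p (p⁻¹ x) = x := p.apply_symm_apply x
    rcases hp (p⁻¹ x) with h | h <;> rw [hx] at h
    · exact Or.inl h.symm
    · exact Or.inr ((congrArg σ h).trans (hσ _)).symm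

variable {σ hσ} {p q : Perm α}

theorem apply_comm_of_mem_orbitPreserving (hp : p ∈ orbitPreserving σ hσ) (x : α) :
    p (σ x) = σ (p x) := by
  have hpσ : p (σ x) = σ x ∨ p (σ x) = x := by simpa only [hσ x] using hp (σ x)
  rcases hp x with hx | hx <;> rcases hpσ with hσx | hσx
  · rw [hσx, hx]
  · rw [hσx, hx, p.injective (hσx.trans hx.symm)]
  · rw [hσx, hx, hσ]
    exact p.injective (hσx.trans hx.symm)
  · rw [hσx, hx, hσ]

theorem mul_self_eq_one_of_mem_orbitPreserving (hp : p ∈ orbitPreserving σ hσ) : p * p = 1 := by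
  ext x
  rcases hp x with hx | hx
  · simp [hx]
  · simp [hx, apply_comm_of_mem_orbitPreserving hp, hσ x]

theorem mul_comm_of_mem_orbitPreserving (hp : p ∈ orbitPreserving σ hσ)
    (hq : q ∈ orbitPreserving σ hσ) : p * q = q * p := by
  ext x
  rcases hp x with hpx | hpx <;> rcases hq x with hqx | hqx <;>
    simp [hpx, hqx, apply_comm_of_mem_orbitPreserving hp, apply_comm_of_mem_orbitPreserving hq]

end Equiv.Perm

section RightLoop

variable {S : Type*} {op : S → S → S} {one t : S}

theorem op_right_cancel (hdiv : ∀ a b : S, ∃! x : S, op x a = b) {a b c : S}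
    (h : op a c = op b c) : a = b :=
  (hdiv c _).unique h rfl

theorem op_ne_self_of_ne_one (hone : ∀ x : S, op one x = x)
    (hdiv : ∀ a b : S, ∃! x : S, op x a = b) (ht : t ≠ one) (x : S) : op t x ≠ x :=
  fun h => ht (op_right_cancel hdiv (h.trans (hone x).symm))

variable {Tc : S → Set S} (hTc : ∀ x : S, Tc x = {x, op t x})
  (hclass : ∀ x y : S, y ∈ Tc x → Tc y = Tc x)
include hTc hclass

theorem class_op_eq (x : S) : Tc (op t x) = Tc x :=
  hclass x _ (by simp [hTc])

theorem op_op_eq_self (hfree : ∀ x : S, op t x ≠ x) (x : S) : op t (op t x) = x := by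
  have h : op t (op t x) ∈ Tc x := by simp [← class_op_eq hTc hclass x, hTc]
  rw [hTc] at h
  exact h.resolve_right (hfree _)

/-- Right translation is injective on `T`-classes. -/
theorem eq_or_eq_op_of_op_mem_class (hdiv : ∀ a b : S, ∃! x : S, op x a = b)
    (hfree : ∀ x : S, op t x ≠ x)
    (hcong : ∀ x x' y y' : S, Tc x = Tc x' → Tc y = Tc y' → Tc (op x y) = Tc (op x' y'))
    {a x w : S} (h : op a w ∈ Tc (op x w)) : a = x ∨ a = op t x := by
  rw [hTc] at h
  refine h.imp (op_right_cancel hdiv) fun haw => ?_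
  have htx : op (op t x) w ∈ Tc (op x w) := by
    simp [← hcong _ _ w w (class_op_eq hTc hclass x) rfl, hTc]
  rw [hTc] at htx
  have htxw : op (op t x) w = op t (op x w) :=
    htx.resolve_left fun h' => hfree x (op_right_cancel hdiv h')
  exact op_right_cancel hdiv (haw.trans htxw.symm)

end RightLoop

theorem stmt14_general {S : Type*} (op : S → S → S) (one t : S)
    (hone : ∀ x : S, op x one = x ∧ op one x = x)
    (hdiv : ∀ a b : S, ∃! x : S, op x a = b)
    (ht : t ≠ one)
    (Tc : S → Set S) (hTc : ∀ x : S, Tc x = {x, op t x})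
    (hclass : ∀ x y : S, y ∈ Tc x → Tc y = Tc x)
    (hcong : ∀ x x' y y' : S, Tc x = Tc x' → Tc y = Tc y' →
      Tc (op x y) = Tc (op x' y'))
    (hgrp : ∀ x y z : S, Tc (op x (op y z)) = Tc (op (op x y) z))
    (F : S → S → Equiv.Perm S)
    (hF : ∀ y z x : S, op (F y z x) (op y z) = op (op x y) z) :
    letI GS : Subgroup (Equiv.Perm S) :=
      Subgroup.closure {p : Equiv.Perm S | ∃ y z : S, p = F y z}
    (∀ g ∈ GS, g * g = 1) ∧ (∀ g ∈ GS, ∀ h ∈ GS, g * h = h * g) := by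
  have hfree := op_ne_self_of_ne_one (fun x => (hone x).2) hdiv ht
  have hσ : Function.Involutive (op t) := op_op_eq_self hTc hclass hfree
  have hle : Subgroup.closure {p | ∃ y z : S, p = F y z} ≤
      Equiv.Perm.orbitPreserving (op t) hσ := by
    refine (Subgroup.closure_le _).mpr ?_
    rintro _ ⟨y, z, rfl⟩ x
    refine eq_or_eq_op_of_op_mem_class hTc hclass hdiv hfree hcong (w := op y z) ?_
    rw [hF, hgrp, hTc]
    exact Set.mem_insert _ _
  exact ⟨fun g hg => Equiv.Perm.mul_self_eq_one_of_mem_orbitPreserving (hle hg),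
    fun g hg h hh => Equiv.Perm.mul_comm_of_mem_orbitPreserving (hle hg) (hle hh)⟩

/-- Same setup: the group torsion
`G_S = ⟨ f(y,z) | y, z ∈ S ⟩ ≤ Sym(S)` is an elementary abelian 2-group. -/
theorem stmt14 {S : Type*} [Fintype S] (op : S → S → S) (one t : S)
    (hone : ∀ x : S, op x one = x ∧ op one x = x)
    (hdiv : ∀ a b : S, ∃! x : S, op x a = b)
    (ht : t ≠ one) (htt : op t t = one)
    (Tc : S → Set S) (hTc : ∀ x : S, Tc x = {x, op t x})
    (hclass : ∀ x y : S, y ∈ Tc x → Tc y = Tc x)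
    (hcong : ∀ x x' y y' : S, Tc x = Tc x' → Tc y = Tc y' →
      Tc (op x y) = Tc (op x' y'))
    (hgrp : ∀ x y z : S, Tc (op x (op y z)) = Tc (op (op x y) z))
    (F : S → S → Equiv.Perm S)
    (hF : ∀ y z x : S, op (F y z x) (op y z) = op (op x y) z) :
    letI GS : Subgroup (Equiv.Perm S) :=
      Subgroup.closure {p : Equiv.Perm S | ∃ y z : S, p = F y z}
    (∀ g ∈ GS, g * g = 1) ∧ (∀ g ∈ GS, ∀ h ∈ GS, g * h = h * g) :=
  stmt14_general op one t hone hdiv ht Tc hTc hclass hcong hgrp F hF
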